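/- Let F be a convex quadrilateral with vertices P_1, P_2, P_3, P_4 ∈ ℚ^2_{≥0} and 𝔓 its associated affine convex polygonal semigroup with cone 𝒞 and extremal rays τ_1 (through P_1) and τ_2 (through P_4). If P_1 ∈ 𝔓 ∩ τ_1, P_4 ∈ 𝔓 ∩ τ_2, and the origin O, P_2 and P_3 are collinear, then 𝔓 is Buchsbaum. -/

import Mathlib

open Set
open scoped Pointwise

/-- Coercion of a lattice point of `ℕ²` into `ℚ²`. -/
def toQ (x : Fin 2 → ℕ) : Fin 2 → ℚ := fun i => (x i : ℚ)

/-- The rational cone `L_{ℚ≥}(G)` generated by a subset `G ⊆ ℚ²`. -/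
def coneQ (G : Set (Fin 2 → ℚ)) : Set (Fin 2 → ℚ) :=
  {x | ∃ (n : ℕ) (q : Fin n → ℚ) (f : Fin n → (Fin 2 → ℚ)),
    (∀ i, 0 ≤ q i) ∧ (∀ i, f i ∈ G) ∧ x = ∑ i, q i • f i}

/-- The ray from the origin through `v ∈ ℚ²`. -/
def rayQ (v : Fin 2 → ℚ) : Set (Fin 2 → ℚ) := {x | ∃ q : ℚ, 0 ≤ q ∧ x = q • v}

/-- The lattice points on the ray from the origin through `v`. -/
def rayN (v : Fin 2 → ℕ) : Set (Fin 2 → ℕ) := {x | toQ x ∈ rayQ (toQ v)}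

/-- Square of the Euclidean norm of a lattice point. -/
def normSq (x : Fin 2 → ℕ) : ℕ := x 0 ^ 2 + x 1 ^ 2

/-- The cone `𝒞 = L_{ℚ≥}(S) ∩ ℕ²` of a subsemigroup `S ⊆ ℕ²`. -/
def coneN (S : Set (Fin 2 → ℕ)) : Set (Fin 2 → ℕ) := {x | toQ x ∈ coneQ (toQ '' S)}

/-- The interior `int(X)` of `X` relative to the extremal rays through `v1, v2`. -/
def interiorOf (X : Set (Fin 2 → ℕ)) (v1 v2 : Fin 2 → ℕ) : Set (Fin 2 → ℕ) :=
  X \ (rayN v1 ∪ rayN v2)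

/-- `S̄ = {a ∈ ℕ² : a + g ∈ S for every generator g ∈ G}`. -/
def sbar (S : Set (Fin 2 → ℕ)) (G : Finset (Fin 2 → ℕ)) : Set (Fin 2 → ℕ) :=
  {a | ∀ g ∈ G, a + g ∈ S}

/-- `n` is the nonzero element of minimal (Euclidean) norm of `T` on the ray `τ`. -/
def IsMinOnRay (T τ : Set (Fin 2 → ℕ)) (n : Fin 2 → ℕ) : Prop :=
  n ∈ T ∩ τ ∧ n ≠ 0 ∧ ∀ m ∈ T ∩ τ, m ≠ 0 → normSq n ≤ normSq m

/-- The Cohen–Macaulay criterion for a simplicial semigroup `T ⊆ ℕ²` with cone `C`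
and extremal rays `τ1, τ2`: for the minimal elements `n1, n2` of `T` on the two rays,
every `a ∈ C \ T` satisfies `a + n1 ∉ T` or `a + n2 ∉ T`. -/
def IsCMsg (T C τ1 τ2 : Set (Fin 2 → ℕ)) : Prop :=
  ∃ n1 n2 : Fin 2 → ℕ, IsMinOnRay T τ1 n1 ∧ IsMinOnRay T τ2 n2 ∧
    ∀ a ∈ C \ T, a + n1 ∉ T ∨ a + n2 ∉ T

/-- `S` is Buchsbaum iff (Rosales) the semigroup `S̄` is Cohen–Macaulay. -/
def IsBuchsbaumSG (S : Set (Fin 2 → ℕ)) (G : Finset (Fin 2 → ℕ))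
    (C τ1 τ2 : Set (Fin 2 → ℕ)) : Prop :=
  IsCMsg (sbar S G) C τ1 τ2

/-- A subsemigroup of `ℕ²` is generated by a single element. -/
def genByOne (T : Set (Fin 2 → ℕ)) : Prop :=
  ∃ n : Fin 2 → ℕ, T = {x | ∃ k : ℕ, x = k • n}

/-- The circle semigroup of the circle (disk) of center `(a,b)` and radius `r`. -/
def circleSG (a b r : ℝ) : Set (Fin 2 → ℕ) :=
  {x | ∃ i : ℕ, ((x 0 : ℝ) - i * a) ^ 2 + ((x 1 : ℝ) - i * b) ^ 2 ≤ (i * r) ^ 2}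

/-- The convex body semigroup `⋃ i, (i·F ∩ ℕ²)` of a convex body `F ⊆ ℚ²`. -/
def polySG (F : Set (Fin 2 → ℚ)) : Set (Fin 2 → ℕ) :=
  {x | ∃ i : ℕ, toQ x ∈ (i : ℚ) • F}

/-- `G` is a minimal generating set of the semigroup `S`. -/
def minimalGenSet (S : Set (Fin 2 → ℕ)) (G : Finset (Fin 2 → ℕ)) : Prop :=
  (AddSubmonoid.closure (G : Set (Fin 2 → ℕ)) : Set (Fin 2 → ℕ)) = S ∧
  ∀ g ∈ G, g ∉ (AddSubmonoid.closure ((G.erase g : Finset (Fin 2 → ℕ)) :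
    Set (Fin 2 → ℕ)) : Set (Fin 2 → ℕ))

/-- `S` is simplicial with extremal rays through `v1` and `v2`. -/
def Simplicial (S : Set (Fin 2 → ℕ)) (v1 v2 : Fin 2 → ℕ) : Prop :=
  v1 ≠ 0 ∧ v2 ≠ 0 ∧ rayN v1 ≠ rayN v2 ∧
  coneQ (toQ '' S) = coneQ {toQ v1, toQ v2}

/-!
Write `v₁ = P 0` and `v₂ = P 3`. If `O` is one of `P 1`, `P 2`, then `𝔓` is the whole cone.
Otherwise collinearity gives `P 1 = t • P 2` with, after relabelling, `0 < t < 1`, and convex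
position of the four vertices forces `P 2 = a • v₁ + b • v₂` with `a, b > 0`, `1 ≤ a + b` and
`t (a + b) ≤ 1`. The ray through `P 2` splits the cone into two sectors. In coordinates `(α, γ)`
with respect to `(v₁, P 2)`, every dilate `i • F` satisfies `α + γ ≤ i ≤ α + γ / t`, and on the
first sector these inequalities cut out exactly `i • F`. Hence the points of `𝔓` on `τ₁` are the
multiples `k • v₁` with `k ∈ ℕ`, and for `x` in the first sector `x + k • v₁ ∈ i • F` gives
`x ∈ (i - k) • F`; symmetrically on the second sector. So `x + n₁ ∈ 𝔓` and `x + n₂ ∈ 𝔓` with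
`nᵢ ∈ 𝔓 ∩ τᵢ` force `x ∈ 𝔓`. Taking for `nᵢ` generators on the rays gives `𝔓̄ = 𝔓`; taking the
minimal elements on the rays, it is the Cohen–Macaulay criterion for `𝔓`.
-/

def RayCancellative {M : Type*} [Add M] (S τ₁ τ₂ : Set M) : Prop :=
  ∀ x, ∀ n₁ ∈ S ∩ τ₁, ∀ n₂ ∈ S ∩ τ₂, x + n₁ ∈ S → x + n₂ ∈ S → x ∈ S

theorem RayCancellative.preimage {M N : Type*} [Add M] [Add N] {S τ₁ τ₂ : Set N}
    (hS : RayCancellative S τ₁ τ₂) (f : M →ₙ+ N) :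
    RayCancellative (f ⁻¹' S) (f ⁻¹' τ₁) (f ⁻¹' τ₂) := by
  intro x n₁ hn₁ n₂ hn₂ h₁ h₂
  simp only [Set.mem_preimage, map_add] at h₁ h₂ ⊢
  exact hS (f x) (f n₁) hn₁ (f n₂) hn₂ h₁ h₂

theorem AddSubmonoid.exists_mem_inter_of_face {M : Type*} [AddMonoid M] {G τ : Set M}
    (hτ : ∀ x ∈ closure G, ∀ y ∈ closure G, x + y ∈ τ → x ∈ τ ∧ y ∈ τ) {p : M}
    (hp : p ∈ closure G) (hpτ : p ∈ τ) (hp₀ : p ≠ 0) : (G ∩ τ).Nonempty := by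
  have : p ∈ closure (G ∩ τ) := by
    refine closure_induction (motive := fun x hx => x ∈ τ → x ∈ closure (G ∩ τ))
      (fun x hx hxτ => subset_closure ⟨hx, hxτ⟩) (fun _ => zero_mem _)
      (fun x y hx hy ihx ihy hxy => ?_) hp hpτ
    obtain ⟨hxτ, hyτ⟩ := hτ x hx y hy hxy
    exact add_mem (ihx hxτ) (ihy hyτ)
  by_contra h
  rw [Set.not_nonempty_iff_eq_empty.1 h, closure_empty, mem_bot] at this
  exact hp₀ this

theorem exists_isMinOnRay {T τ : Set (Fin 2 → ℕ)} {w : Fin 2 → ℕ} (hw : w ∈ T ∩ τ)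
    (hw₀ : w ≠ 0) : ∃ n, IsMinOnRay T τ n := by
  obtain ⟨n, ⟨hn, hn₀⟩, hmin⟩ :=
    (measure normSq).wf.has_min {m | m ∈ T ∩ τ ∧ m ≠ 0} ⟨w, hw, hw₀⟩
  exact ⟨n, hn, hn₀, fun m hm hm₀ => not_lt.1 (hmin m ⟨hm, hm₀⟩)⟩

theorem isCMsg_of_rayCancellative {T τ₁ τ₂ : Set (Fin 2 → ℕ)} (hT : RayCancellative T τ₁ τ₂)
    {p₁ p₂ : Fin 2 → ℕ} (hp₁ : p₁ ∈ T ∩ τ₁) (hp₁₀ : p₁ ≠ 0) (hp₂ : p₂ ∈ T ∩ τ₂)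
    (hp₂₀ : p₂ ≠ 0) (C : Set (Fin 2 → ℕ)) : IsCMsg T C τ₁ τ₂ := by
  obtain ⟨n₁, hn₁⟩ := exists_isMinOnRay hp₁ hp₁₀
  obtain ⟨n₂, hn₂⟩ := exists_isMinOnRay hp₂ hp₂₀
  refine ⟨n₁, n₂, hn₁, hn₂, fun a ha => ?_⟩
  by_contra h
  rw [not_or, not_not, not_not] at h
  exact ha.2 (hT a n₁ hn₁.1 n₂ hn₂.1 h.1 h.2)

theorem sbar_eq_self {S τ₁ τ₂ : Set (Fin 2 → ℕ)} {G : Finset (Fin 2 → ℕ)}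
    (hGS : (AddSubmonoid.closure (G : Set (Fin 2 → ℕ)) : Set (Fin 2 → ℕ)) = S)
    (hG₁ : (↑G ∩ τ₁).Nonempty) (hG₂ : (↑G ∩ τ₂).Nonempty) (hS : RayCancellative S τ₁ τ₂) :
    sbar S G = S := by
  have hGsub : ∀ g ∈ G, g ∈ S := fun g hg => hGS ▸ AddSubmonoid.subset_closure hg
  ext a
  refine ⟨fun ha => ?_, fun ha g hg => ?_⟩
  · obtain ⟨g₁, hg₁G, hg₁⟩ := hG₁
    obtain ⟨g₂, hg₂G, hg₂⟩ := hG₂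
    exact hS a g₁ ⟨hGsub g₁ hg₁G, hg₁⟩ g₂ ⟨hGsub g₂ hg₂G, hg₂⟩ (ha g₁ hg₁G) (ha g₂ hg₂G)
  · rw [← hGS] at ha ⊢
    exact add_mem ha (AddSubmonoid.subset_closure hg)

section Convex

variable {E ι : Type*} [AddCommGroup E] [Module ℚ E]

theorem Convex.smul_add_smul_add_smul_mem {s : Set E} (hs : Convex ℚ s) {x y z : E}
    (hx : x ∈ s) (hy : y ∈ s) (hz : z ∈ s) {a b c : ℚ} (ha : 0 ≤ a) (hb : 0 ≤ b) (hc : 0 ≤ c) :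
    a • x + b • y + c • z ∈ (a + b + c) • s := by
  rw [hs.add_smul (add_nonneg ha hb) hc, hs.add_smul ha hb]
  exact Set.add_mem_add (Set.add_mem_add (Set.smul_mem_smul_set hx)
    (Set.smul_mem_smul_set hy)) (Set.smul_mem_smul_set hz)

theorem LinearIndependent.pair_smul_add {x y : E} (h : LinearIndependent ℚ ![x, y]) {a b : ℚ}
    (hb : b ≠ 0) :
    LinearIndependent ℚ ![x, a • x + b • y] := by
  rw [LinearIndependent.pair_iff] at h ⊢
  intro s t hst
  obtain ⟨h₁, h₂⟩ := h (s + t * a) (t * b) (by rw [← hst]; module)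
  obtain rfl : t = 0 := (mul_eq_zero.1 h₂).resolve_right hb
  simpa using h₁

theorem collinear_smul_smul_smul (v : E) (a b c : ℚ) : Collinear ℚ {a • v, b • v, c • v} :=
  (collinear_iff_exists_forall_eq_smul_vadd _).2
    ⟨0, v, by rintro _ (rfl | rfl | rfl) <;> exact ⟨_, (add_zero _).symm⟩⟩

theorem convexIndependent_of_forall_notMem {p : ι → E}
    (h : ∀ i, p i ∉ convexHull ℚ (p '' {j | j ≠ i})) : ConvexIndependent ℚ p :=
  convexIndependent_iff_notMem_convexHull_sdiff.2 fun i _ hi =>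
    h i (convexHull_mono (Set.image_mono fun _ hj => hj.2) hi)

theorem ConvexIndependent.mem_of_eq_smul_add_smul_add_smul {p : ι → E} (hp : ConvexIndependent ℚ p)
    {i j k l : ι} {a b c : ℚ} (ha : 0 ≤ a) (hb : 0 ≤ b) (hc : 0 ≤ c) (habc : a + b + c = 1)
    (h : p i = a • p j + b • p k + c • p l) : i ∈ ({j, k, l} : Set ι) := by
  refine (hp.mem_convexHull_iff _ _).1 ?_
  have := (convex_convexHull ℚ (p '' {j, k, l})).smul_add_smul_add_smul_mem
    (subset_convexHull ℚ _ ⟨j, by simp, rfl⟩) (subset_convexHull ℚ _ ⟨k, by simp, rfl⟩)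
    (subset_convexHull ℚ _ ⟨l, by simp, rfl⟩) ha hb hc
  rwa [habc, one_smul, ← h] at this

theorem ConvexIndependent.not_collinear {p : ι → E} (hp : ConvexIndependent ℚ p)
    {i j k : ι} (hij : i ≠ j) (hik : i ≠ k) (hjk : j ≠ k) : ¬ Collinear ℚ {p i, p j, p k} := by
  have key : ∀ {a b c : ι}, b ≠ a → b ≠ c → Wbtw ℚ (p a) (p b) (p c) → False := by
    intro a b c hba hbc h
    have : p b ∈ convexHull ℚ (p '' {a, c}) := by
      rw [Set.image_pair]
      exact segment_subset_convexHull (by simp) (by simp) h.mem_segment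
    rcases (hp.mem_convexHull_iff _ _).1 this with h | h <;> contradiction
  intro hcol
  rcases hcol.wbtw_or_wbtw_or_wbtw with h | h | h
  · exact key hij.symm hjk h
  · exact key hjk.symm hik.symm h
  · exact key hik hij h

theorem ConvexIndependent.quad_coeff_bounds {P : Fin 4 → E} (hP : ConvexIndependent ℚ P)
    {t a b : ℚ} (ht : t < 1) (h₁ : P 1 = t • P 2) (h₂ : P 2 = a • P 0 + b • P 3)
    (ha : 0 ≤ a) (hb : 0 ≤ b) :
    0 < a ∧ 0 < b ∧ 1 ≤ a + b ∧ t * (a + b) ≤ 1 := by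
  refine ⟨ha.lt_of_ne ?_, hb.lt_of_ne ?_, ?_, ?_⟩
  · rintro rfl
    apply hP.not_collinear (i := 1) (j := 2) (k := 3) (by decide) (by decide) (by decide)
    rw [h₁, h₂, zero_smul, zero_add, smul_smul, ← one_smul ℚ (P 3), smul_smul, smul_smul]
    exact collinear_smul_smul_smul _ _ _ _
  · rintro rfl
    apply hP.not_collinear (i := 0) (j := 1) (k := 2) (by decide) (by decide) (by decide)
    rw [h₁, h₂, zero_smul, add_zero, smul_smul, ← one_smul ℚ (P 0), smul_smul, smul_smul]
    exact collinear_smul_smul_smul _ _ _ _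
  · by_contra! hlt
    have hden : 0 < 1 - t * (a + b) := by nlinarith
    set l := (1 - (a + b)) / (1 - t * (a + b))
    have hl : l * (1 - t * (a + b)) = 1 - (a + b) := div_mul_cancel₀ _ hden.ne'
    have hl₀ : 0 ≤ l := div_nonneg (by linarith) hden.le
    have hl₁ : l * t ≤ 1 := by nlinarith
    have := hP.mem_of_eq_smul_add_smul_add_smul (i := 2) (j := 1) (k := 0) (l := 3) hl₀
      (mul_nonneg ha (sub_nonneg.2 hl₁)) (mul_nonneg hb (sub_nonneg.2 hl₁))
      (by linear_combination hl) (by rw [h₁]; linear_combination (norm := module) (1 - l * t) • h₂)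
    simp at this
  · by_contra! hgt
    have hden : 0 < a + b - 1 := by nlinarith
    set l := (t * (a + b) - 1) / (a + b - 1)
    have hl : l * (a + b - 1) = t * (a + b) - 1 := div_mul_cancel₀ _ hden.ne'
    have hl₀ : 0 ≤ l := div_nonneg (by linarith) hden.le
    have hlt : l ≤ t := by nlinarith
    have := hP.mem_of_eq_smul_add_smul_add_smul (i := 1) (j := 2) (k := 0) (l := 3) hl₀
      (mul_nonneg ha (sub_nonneg.2 hlt)) (mul_nonneg hb (sub_nonneg.2 hlt))
      (by linear_combination -hl) (by linear_combination (norm := module) h₁ + (t - l) • h₂)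
    simp at this

end Convex

theorem nonneg_of_smul_nonneg {ι : Type*} {v : ι → ℚ} {t : ℚ} (hv : v ≠ 0) (hv₀ : 0 ≤ v)
    (htv : 0 ≤ t • v) : 0 ≤ t := by
  obtain ⟨i, hi⟩ := Function.ne_iff.1 hv
  exact nonneg_of_mul_nonneg_left (by simpa using htv i) ((hv₀ i).lt_of_ne' hi)

theorem exists_pos_smul_of_collinear {ι : Type*} {u v : ι → ℚ} (hcol : Collinear ℚ {0, u, v})
    (hu : u ≠ 0) (hv : v ≠ 0) (hu₀ : 0 ≤ u) (hv₀ : 0 ≤ v) : ∃ t : ℚ, 0 < t ∧ u = t • v := by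
  obtain ⟨w, hw⟩ := (collinear_iff_of_mem (Set.mem_insert 0 _)).1 hcol
  obtain ⟨r, hr⟩ := hw u (by simp)
  obtain ⟨s, hs⟩ := hw v (by simp)
  simp only [vadd_eq_add, add_zero] at hr hs
  have hs₀ : s ≠ 0 := by rintro rfl; exact hv (by simp [hs])
  have huv : u = (r / s) • v := by rw [hs, smul_smul, div_mul_cancel₀ _ hs₀, hr]
  refine ⟨r / s, (nonneg_of_smul_nonneg hv hv₀ (huv ▸ hu₀)).lt_of_ne ?_, huv⟩
  rintro h
  exact hu (by rw [huv, ← h, zero_smul])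

section Quadrilateral

variable {E : Type*} [AddCommGroup E] [Module ℚ E]

def polyCone (F : Set E) : Set E := ⋃ i : ℕ, (i : ℚ) • F

theorem smul_add_smul_mem_smul_convexHull {e f w : E} {t α γ j : ℚ} (ht : t < 1)
    (hα : 0 ≤ α) (h₁ : α + γ ≤ j) (h₂ : t * j ≤ t * α + γ) :
    α • e + γ • f ∈ j • convexHull ℚ {e, t • f, f, w} := by
  have h1t : 1 - t ≠ 0 := by linarith
  have := (convex_convexHull ℚ {e, t • f, f, w}).smul_add_smul_add_smul_mem
    (x := e) (y := t • f) (z := f) (subset_convexHull ℚ _ (by simp))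
    (subset_convexHull ℚ _ (by simp)) (subset_convexHull ℚ _ (by simp)) hα
    (div_nonneg (by linarith) (by linarith) : 0 ≤ (j - α - γ) / (1 - t))
    (div_nonneg (by linarith) (by linarith) : 0 ≤ (γ - t * (j - α)) / (1 - t))
  have hsum : α + (j - α - γ) / (1 - t) + (γ - t * (j - α)) / (1 - t) = j := by
    field_simp
    ring
  have hcombo : α • e + ((j - α - γ) / (1 - t)) • t • f + ((γ - t * (j - α)) / (1 - t)) • f =
      α • e + γ • f := by
    rw [smul_smul, add_assoc, ← add_smul]
    congr 2
    field_simp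
    ring
  rwa [hsum, hcombo] at this

variable (B : Module.Basis (Fin 2) ℚ E) {t c d : ℚ} {w : E}

theorem coord_bounds_of_mem_smul (ht : t ≤ 1) (hw : w = c • B 0 + d • B 1) (hcd : c + d ≤ 1)
    (htcd : t ≤ t * c + d) {z : E} {i : ℕ}
    (hz : z ∈ (i : ℚ) • convexHull ℚ {B 0, t • B 1, B 1, w}) :
    B.coord 0 z + B.coord 1 z ≤ i ∧ t * i ≤ t * B.coord 0 z + B.coord 1 z := by
  obtain ⟨y, hy, rfl⟩ := Set.mem_smul_set.1 hz
  have hconv : Convex ℚ ({y | (B.coord 0 + B.coord 1) y ≤ 1} ∩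
      {y | t ≤ (t • B.coord 0 + B.coord 1) y}) :=
    (convex_halfSpace_le (LinearMap.isLinear _) 1).inter
      (convex_halfSpace_ge (LinearMap.isLinear _) t)
  obtain ⟨h₁, h₂⟩ := convexHull_min (by
    rintro _ (rfl | rfl | rfl | rfl) <;> simp [hw] <;> (try constructor) <;> linarith) hconv hy
  simp only [Set.mem_ofPred_eq, LinearMap.add_apply, LinearMap.smul_apply, smul_eq_mul] at h₁ h₂
  have hi : (0 : ℚ) ≤ i := i.cast_nonneg
  simp only [map_smul, smul_eq_mul]
  constructor <;> nlinarith

theorem mem_smul_of_add_smul_mem (ht : t < 1) (hw : w = c • B 0 + d • B 1) (hcd : c + d ≤ 1)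
    (htcd : t ≤ t * c + d) {α γ : ℚ} (hα : 0 ≤ α) (hγ : 0 ≤ γ) {i k : ℕ}
    (h : α • B 0 + γ • B 1 + (k : ℚ) • B 0 ∈ (i : ℚ) • convexHull ℚ {B 0, t • B 1, B 1, w}) :
    α • B 0 + γ • B 1 ∈ ((i - k : ℕ) : ℚ) • convexHull ℚ {B 0, t • B 1, B 1, w} := by
  obtain ⟨h₁, h₂⟩ := coord_bounds_of_mem_smul B ht.le hw hcd htcd h
  simp only [Module.Basis.coord_apply, map_add, map_smul, Module.Basis.repr_self, smul_eq_mul,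
    mul_one, Finsupp.single_eq_same, ne_eq, zero_ne_one, one_ne_zero, not_false_eq_true,
    Finsupp.single_eq_of_ne] at h₁ h₂
  have hki : k ≤ i := by exact_mod_cast (show (k : ℚ) ≤ i by linarith)
  rw [Nat.cast_sub hki]
  exact smul_add_smul_mem_smul_convexHull ht hα (by linarith) (by linarith)

theorem eq_of_smul_mem_smul (ht₀ : 0 < t) (ht : t ≤ 1) (hw : w = c • B 0 + d • B 1)
    (hcd : c + d ≤ 1) (htcd : t ≤ t * c + d) {q : ℚ} {k : ℕ}
    (h : q • B 0 ∈ (k : ℚ) • convexHull ℚ {B 0, t • B 1, B 1, w}) : q = k := by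
  obtain ⟨h₁, h₂⟩ := coord_bounds_of_mem_smul B ht hw hcd htcd h
  simp only [map_smul, Module.Basis.coord_apply, Module.Basis.repr_self, Finsupp.single_eq_same,
    smul_eq_mul, mul_one, ne_eq, one_ne_zero, not_false_eq_true, Finsupp.single_eq_of_ne,
    mul_zero, add_zero] at h₁ h₂
  exact le_antisymm h₁ (le_of_mul_le_mul_left h₂ ht₀)

theorem mem_polyCone_of_add_smul_mem (ht₀ : 0 < t) (ht : t < 1) (hw : w = c • B 0 + d • B 1)
    (hcd : c + d ≤ 1) (htcd : t ≤ t * c + d) {α γ q : ℚ} (hα : 0 ≤ α) (hγ : 0 ≤ γ)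
    (hq : q • B 0 ∈ polyCone (convexHull ℚ {B 0, t • B 1, B 1, w}))
    (h : α • B 0 + γ • B 1 + q • B 0 ∈ polyCone (convexHull ℚ {B 0, t • B 1, B 1, w})) :
    α • B 0 + γ • B 1 ∈ polyCone (convexHull ℚ {B 0, t • B 1, B 1, w}) := by
  obtain ⟨k, hk⟩ := Set.mem_iUnion.1 hq
  obtain ⟨i, hi⟩ := Set.mem_iUnion.1 h
  rw [eq_of_smul_mem_smul B ht₀ ht.le hw hcd htcd hk] at hi
  exact Set.mem_iUnion.2 ⟨_, mem_smul_of_add_smul_mem B ht hw hcd htcd hα hγ hi⟩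

end Quadrilateral

section Cone

variable {v₁ v₂ X : Fin 2 → ℚ}

theorem mem_coneQ_self {G : Set (Fin 2 → ℚ)} {x : Fin 2 → ℚ} (hx : x ∈ G) : x ∈ coneQ G :=
  ⟨1, ![1], ![x], by simp, by simpa using hx, by simp⟩

theorem mem_coneQ_pair :
    X ∈ coneQ {v₁, v₂} ↔ ∃ a b : ℚ, 0 ≤ a ∧ 0 ≤ b ∧ X = a • v₁ + b • v₂ := by
  constructor
  · rintro ⟨n, q, f, hq, hf, rfl⟩
    classical
    refine ⟨∑ i, if f i = v₁ then q i else 0, ∑ i, if f i = v₁ then 0 else q i,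
      Finset.sum_nonneg fun i _ => ?_, Finset.sum_nonneg fun i _ => ?_, ?_⟩
    · split_ifs <;> simp [hq i]
    · split_ifs <;> simp [hq i]
    rw [Finset.sum_smul, Finset.sum_smul, ← Finset.sum_add_distrib]
    refine Finset.sum_congr rfl fun i _ => ?_
    rcases hf i with h | h
    · simp [h]
    · rw [Set.mem_singleton_iff.1 h]
      by_cases h' : v₂ = v₁ <;> simp [h']
  · rintro ⟨a, b, ha, hb, rfl⟩
    exact ⟨2, ![a, b], ![v₁, v₂], fun i => by fin_cases i <;> assumption,
      fun i => by fin_cases i <;> simp, by simp [Fin.sum_univ_two]⟩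

theorem smul_mem_coneQ_pair {c : ℚ} (hc : 0 ≤ c) (hX : X ∈ coneQ {v₁, v₂}) :
    c • X ∈ coneQ {v₁, v₂} := by
  obtain ⟨a, b, ha, hb, rfl⟩ := mem_coneQ_pair.1 hX
  exact mem_coneQ_pair.2 ⟨c * a, c * b, mul_nonneg hc ha, mul_nonneg hc hb, by module⟩

theorem convex_coneQ_pair : Convex ℚ (coneQ {v₁, v₂}) := by
  intro X hX Y hY s t hs ht _
  obtain ⟨a, b, ha, hb, rfl⟩ := mem_coneQ_pair.1 hX
  obtain ⟨c, d, hc, hd, rfl⟩ := mem_coneQ_pair.1 hY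
  exact mem_coneQ_pair.2 ⟨s * a + t * c, s * b + t * d, by positivity, by positivity, by module⟩

theorem polyCone_subset_coneQ_pair {F : Set (Fin 2 → ℚ)} (hF : F ⊆ coneQ {v₁, v₂}) :
    polyCone F ⊆ coneQ {v₁, v₂} := by
  intro X hX
  obtain ⟨i, Y, hY, rfl⟩ := Set.mem_iUnion.1 hX
  exact smul_mem_coneQ_pair i.cast_nonneg (hF hY)

theorem coneQ_subset_polyCone {F : Set (Fin 2 → ℚ)} (hF : Convex ℚ F) (h₀ : 0 ∈ F)
    (h₁ : v₁ ∈ F) (h₂ : v₂ ∈ F) : coneQ {v₁, v₂} ⊆ polyCone F := by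
  intro X hX
  obtain ⟨a, b, ha, hb, rfl⟩ := mem_coneQ_pair.1 hX
  refine Set.mem_iUnion.2 ⟨⌈a + b⌉₊, ?_⟩
  have := hF.smul_add_smul_add_smul_mem h₁ h₂ h₀ ha hb
    (sub_nonneg.2 (Nat.le_ceil (a + b)) : 0 ≤ (⌈a + b⌉₊ : ℚ) - (a + b))
  rwa [smul_zero, add_zero, add_sub_cancel] at this

theorem exists_basis_pair {x y : Fin 2 → ℚ} (h : LinearIndependent ℚ ![x, y]) :
    ∃ B : Module.Basis (Fin 2) ℚ (Fin 2 → ℚ), B 0 = x ∧ B 1 = y :=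
  ⟨basisOfLinearIndependentOfCardEqFinrank h (by simp), by simp, by simp⟩

theorem mem_rayQ_of_add_mem_rayQ (hli : LinearIndependent ℚ ![v₁, v₂]) {Y : Fin 2 → ℚ}
    (hX : X ∈ coneQ {v₁, v₂}) (hY : Y ∈ coneQ {v₁, v₂}) (h : X + Y ∈ rayQ v₁) :
    X ∈ rayQ v₁ := by
  obtain ⟨a, b, ha, hb, rfl⟩ := mem_coneQ_pair.1 hX
  obtain ⟨c, d, -, hd, rfl⟩ := mem_coneQ_pair.1 hY
  obtain ⟨q, -, hq⟩ := h
  have := (LinearIndependent.pair_iff.1 hli (a + c - q) (b + d)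
    (by linear_combination (norm := module) hq)).2
  exact ⟨a, ha, by rw [show b = 0 by linarith, zero_smul, add_zero]⟩

theorem mem_coneQ_of_add_smul_mem (hli : LinearIndependent ℚ ![v₁, v₂]) {q₁ q₂ : ℚ}
    (h₁ : X + q₁ • v₁ ∈ coneQ {v₁, v₂}) (h₂ : X + q₂ • v₂ ∈ coneQ {v₁, v₂}) :
    X ∈ coneQ {v₁, v₂} := by
  obtain ⟨a, b, -, hb, e₁⟩ := mem_coneQ_pair.1 h₁
  obtain ⟨c, d, hc, -, e₂⟩ := mem_coneQ_pair.1 h₂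
  have := (LinearIndependent.pair_iff.1 hli (a - q₁ - c) (b - d + q₂)
    (by linear_combination (norm := module) e₂ - e₁)).1
  exact mem_coneQ_pair.2 ⟨c, b, hc, hb, by linear_combination (norm := module) e₁ + this • v₁⟩

end Cone

section Sector

variable {v₁ v₂ Q : Fin 2 → ℚ} {t a b : ℚ}

theorem mem_polyCone_of_sector (hli : LinearIndependent ℚ ![v₁, v₂]) (ht₀ : 0 < t) (ht : t < 1)
    (hQ : Q = a • v₁ + b • v₂) (hb : 0 < b) (hab : 1 ≤ a + b) (htab : t * (a + b) ≤ 1)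
    {x₁ x₂ q : ℚ} (hx₂ : 0 ≤ x₂) (hside : a * x₂ ≤ b * x₁)
    (hq : q • v₁ ∈ polyCone (convexHull ℚ {v₁, t • Q, Q, v₂}))
    (h : x₁ • v₁ + x₂ • v₂ + q • v₁ ∈ polyCone (convexHull ℚ {v₁, t • Q, Q, v₂})) :
    x₁ • v₁ + x₂ • v₂ ∈ polyCone (convexHull ℚ {v₁, t • Q, Q, v₂}) := by
  obtain ⟨B, rfl, rfl⟩ := exists_basis_pair (hQ ▸ hli.pair_smul_add (a := a) hb.ne')
  have hv₂ : v₂ = (-a / b) • B 0 + (1 / b) • B 1 := by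
    rw [hQ]
    match_scalars <;> field_simp
    ring
  have hX : x₁ • B 0 + x₂ • v₂ = (x₁ - a * x₂ / b) • B 0 + (x₂ / b) • B 1 := by
    rw [hQ]
    match_scalars <;> field_simp
    ring
  rw [hX] at h ⊢
  refine mem_polyCone_of_add_smul_mem B ht₀ ht hv₂ ?_ ?_ ?_ (by positivity) hq h
  · rw [← add_div, div_le_one hb]
    linarith
  · rw [← sub_nonneg, show t * (-a / b) + 1 / b - t = (1 - t * (a + b)) / b by field_simp; ring]
    exact div_nonneg (by linarith) hb.le
  · rw [sub_nonneg, div_le_iff₀ hb]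
    linarith

theorem mem_polyCone_of_mem_coneQ (hli : LinearIndependent ℚ ![v₁, v₂]) (ht₀ : 0 < t) (ht : t < 1)
    (hQ : Q = a • v₁ + b • v₂) (ha : 0 < a) (hb : 0 < b) (hab : 1 ≤ a + b)
    (htab : t * (a + b) ≤ 1) {X : Fin 2 → ℚ} {q₁ q₂ : ℚ} (hX : X ∈ coneQ {v₁, v₂})
    (hq₁ : q₁ • v₁ ∈ polyCone (convexHull ℚ {v₁, t • Q, Q, v₂}))
    (hq₂ : q₂ • v₂ ∈ polyCone (convexHull ℚ {v₁, t • Q, Q, v₂}))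
    (h₁ : X + q₁ • v₁ ∈ polyCone (convexHull ℚ {v₁, t • Q, Q, v₂}))
    (h₂ : X + q₂ • v₂ ∈ polyCone (convexHull ℚ {v₁, t • Q, Q, v₂})) :
    X ∈ polyCone (convexHull ℚ {v₁, t • Q, Q, v₂}) := by
  obtain ⟨x₁, x₂, hx₁, hx₂, rfl⟩ := mem_coneQ_pair.1 hX
  rcases le_total (a * x₂) (b * x₁) with hs | hs
  · exact mem_polyCone_of_sector hli ht₀ ht hQ hb hab htab hx₂ hs hq₁ h₁
  · have hF : ({v₂, t • Q, Q, v₁} : Set (Fin 2 → ℚ)) = {v₁, t • Q, Q, v₂} := by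
      ext
      simp only [Set.mem_insert_iff, Set.mem_singleton_iff]
      tauto
    rw [← hF] at h₂ hq₂ ⊢
    rw [add_comm (x₁ • v₁)] at h₂ ⊢
    exact mem_polyCone_of_sector (LinearIndependent.pair_symm_iff.1 hli) ht₀ ht
      (hQ.trans (add_comm _ _)) ha (by linarith) (by linarith) hx₁ (by linarith) hq₂ h₂

end Sector

theorem mem_polyCone_of_convexIndependent {P : Fin 4 → Fin 2 → ℚ} (hP : ConvexIndependent ℚ P)
    (hli : LinearIndependent ℚ ![P 0, P 3]) {t : ℚ} (ht₀ : 0 < t) (ht : t < 1)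
    (h₁₂ : P 1 = t • P 2) (hP₂ : P 2 ∈ coneQ {P 0, P 3}) {X : Fin 2 → ℚ} {q₁ q₂ : ℚ}
    (hX : X ∈ coneQ {P 0, P 3})
    (hq₁ : q₁ • P 0 ∈ polyCone (convexHull ℚ (Set.range P)))
    (hq₂ : q₂ • P 3 ∈ polyCone (convexHull ℚ (Set.range P)))
    (h₁ : X + q₁ • P 0 ∈ polyCone (convexHull ℚ (Set.range P)))
    (h₂ : X + q₂ • P 3 ∈ polyCone (convexHull ℚ (Set.range P))) :
    X ∈ polyCone (convexHull ℚ (Set.range P)) := by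
  obtain ⟨a, b, ha, hb, hQ⟩ := mem_coneQ_pair.1 hP₂
  obtain ⟨ha, hb, hab, htab⟩ := hP.quad_coeff_bounds ht h₁₂ hQ ha hb
  have hrange : Set.range P = {P 0, t • P 2, P 2, P 3} := by
    rw [← h₁₂]
    ext
    simp [Fin.exists_fin_succ, eq_comm]
  rw [hrange] at hq₁ hq₂ h₁ h₂ ⊢
  exact mem_polyCone_of_mem_coneQ hli ht₀ ht hQ ha hb hab htab hX hq₁ hq₂ h₁ h₂

theorem rayCancellative_polyCone {P : Fin 4 → Fin 2 → ℚ} (hpos : ∀ j, 0 ≤ P j)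
    (hP : ConvexIndependent ℚ P) (hli : LinearIndependent ℚ ![P 0, P 3])
    (hPc : ∀ j, P j ∈ coneQ {P 0, P 3}) (hcol : Collinear ℚ {0, P 1, P 2}) :
    RayCancellative (polyCone (convexHull ℚ (Set.range P))) (rayQ (P 0)) (rayQ (P 3)) := by
  rintro X _ ⟨hq₁, q₁, -, rfl⟩ _ ⟨hq₂, q₂, -, rfl⟩ h₁ h₂
  have hsub := polyCone_subset_coneQ_pair
    (convexHull_min (Set.range_subset_iff.2 hPc) convex_coneQ_pair)
  have hX := mem_coneQ_of_add_smul_mem hli (hsub h₁) (hsub h₂)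
  have hPF : ∀ j, P j ∈ convexHull ℚ (Set.range P) := fun j =>
    subset_convexHull ℚ _ (Set.mem_range_self j)
  by_cases h₀ : P 1 = 0 ∨ P 2 = 0
  · refine coneQ_subset_polyCone (convex_convexHull ℚ _) ?_ (hPF 0) (hPF 3) hX
    obtain h | h := h₀ <;> exact h ▸ hPF _
  rw [not_or] at h₀
  obtain ⟨t, ht₀, h₁₂⟩ := exists_pos_smul_of_collinear hcol h₀.1 h₀.2 (hpos 1) (hpos 2)
  have ht₁ : t ≠ 1 := by
    rintro rfl
    exact hP.injective.ne (by decide : (1 : Fin 4) ≠ 2) (by rw [h₁₂, one_smul])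
  rcases ht₁.lt_or_gt with ht | ht
  · exact mem_polyCone_of_convexIndependent hP hli ht₀ ht h₁₂ (hPc 2) hX hq₁ hq₂ h₁ h₂
  · -- swap `P 1` and `P 2`, so that the vertex nearer to `O` comes first
    have hrange : Set.range (P ∘ Equiv.swap 1 2) = Set.range P :=
      (Equiv.swap 1 2).surjective.range_comp P
    have := mem_polyCone_of_convexIndependent (P := P ∘ Equiv.swap 1 2)
      (hP.comp_embedding (Equiv.swap 1 2).toEmbedding) hli (inv_pos.2 ht₀)
      (inv_lt_one_of_one_lt₀ ht)
      (by simp [h₁₂, smul_smul, ht₀.ne']) (hPc 1) hX (hrange ▸ hq₁) (hrange ▸ hq₂)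
      (hrange ▸ h₁) (hrange ▸ h₂)
    rwa [hrange] at this

theorem toQ_nonneg (x : Fin 2 → ℕ) : 0 ≤ toQ x := fun i => (x i).cast_nonneg

theorem toQ_eq_zero {x : Fin 2 → ℕ} : toQ x = 0 ↔ x = 0 := by
  simp [toQ, funext_iff]

def toQAddHom : (Fin 2 → ℕ) →ₙ+ (Fin 2 → ℚ) where
  toFun := toQ
  map_add' x y := by funext i; simp [toQ]

theorem polySG_eq_preimage (F : Set (Fin 2 → ℚ)) : polySG F = toQAddHom ⁻¹' polyCone F := by
  ext
  simp [polySG, polyCone, toQAddHom]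

theorem mem_rayN_self (p : Fin 2 → ℕ) : p ∈ rayN p := ⟨1, zero_le_one, (one_smul ℚ _).symm⟩

theorem rayQ_smul {c : ℚ} (hc : 0 < c) (v : Fin 2 → ℚ) : rayQ (c • v) = rayQ v := by
  ext x
  constructor
  · rintro ⟨r, hr, rfl⟩
    exact ⟨r * c, mul_nonneg hr hc.le, smul_smul r c v⟩
  · rintro ⟨r, hr, rfl⟩
    exact ⟨r / c, div_nonneg hr hc.le, by rw [smul_smul, div_mul_cancel₀ _ hc.ne']⟩

theorem linearIndependent_of_rayN_ne {p q : Fin 2 → ℕ} (hp : p ≠ 0) (hq : q ≠ 0)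
    (h : rayN p ≠ rayN q) : LinearIndependent ℚ ![toQ p, toQ q] := by
  rw [LinearIndependent.pair_iff' (toQ_eq_zero.not.2 hp)]
  intro c hc
  have hc₀ : 0 ≤ c := nonneg_of_smul_nonneg (toQ_eq_zero.not.2 hp) (toQ_nonneg p)
    (hc ▸ toQ_nonneg q)
  have hc₀' : c ≠ 0 := by
    rintro rfl
    exact hq (toQ_eq_zero.1 (by rw [← hc, zero_smul]))
  exact h (by simp only [rayN, ← hc, rayQ_smul (hc₀.lt_of_ne' hc₀')])

theorem exists_toQ_eq_smul {w : Fin 2 → ℚ} (hw : 0 ≤ w) :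
    ∃ (m : Fin 2 → ℕ) (d : ℕ), 0 < d ∧ toQ m = (d : ℚ) • w := by
  have key : ∀ q : ℚ, 0 ≤ q → ((q.num.toNat : ℕ) : ℚ) = q.den * q := fun q hq => by
    rw [mul_comm, Rat.mul_den_eq_num]
    exact_mod_cast Int.toNat_of_nonneg (Rat.num_nonneg.2 hq)
  refine ⟨![(w 0).num.toNat * (w 1).den, (w 1).num.toNat * (w 0).den],
    (w 0).den * (w 1).den, by positivity, ?_⟩
  funext i
  fin_cases i <;>
    simp only [toQ, Fin.zero_eta, Fin.mk_one, Matrix.cons_val_zero, Matrix.cons_val_one,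
      Nat.cast_mul, key _ (hw 0), key _ (hw 1), Pi.smul_apply, smul_eq_mul] <;> ring

theorem mem_coneQ_of_nonneg {F : Set (Fin 2 → ℚ)} {v₁ v₂ w : Fin 2 → ℚ} (hw : 0 ≤ w)
    (hwF : w ∈ F) (hS : ∀ x ∈ polySG F, toQ x ∈ coneQ {v₁, v₂}) : w ∈ coneQ {v₁, v₂} := by
  obtain ⟨m, d, hd, hm⟩ := exists_toQ_eq_smul hw
  have := smul_mem_coneQ_pair (inv_nonneg.2 d.cast_nonneg)
    (hm ▸ hS m ⟨d, hm ▸ Set.smul_mem_smul_set hwF⟩)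
  rwa [smul_smul, inv_mul_cancel₀ (by positivity), one_smul] at this

theorem exists_generator_mem_rayN {S : Set (Fin 2 → ℕ)} {G : Finset (Fin 2 → ℕ)}
    {p q : Fin 2 → ℕ} (hli : LinearIndependent ℚ ![toQ p, toQ q])
    (hGS : (AddSubmonoid.closure (G : Set (Fin 2 → ℕ)) : Set (Fin 2 → ℕ)) = S)
    (hSc : ∀ x ∈ S, toQ x ∈ coneQ {toQ p, toQ q}) (hp : p ∈ S) (hp₀ : p ≠ 0) :
    (↑G ∩ rayN p).Nonempty := by
  refine AddSubmonoid.exists_mem_inter_of_face (fun x hx y hy hxy => ?_)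
    (by rwa [← SetLike.mem_coe, hGS]) (mem_rayN_self p) hp₀
  rw [SetLike.mem_coe.symm, hGS] at hx hy
  have hxy' : toQ x + toQ y ∈ rayQ (toQ p) := map_add toQAddHom x y ▸ hxy
  exact ⟨mem_rayQ_of_add_mem_rayQ hli (hSc x hx) (hSc y hy) hxy',
    mem_rayQ_of_add_mem_rayQ hli (hSc y hy) (hSc x hx) (add_comm (toQ x) _ ▸ hxy')⟩

/-- Let `F` be a convex quadrilateral with rational vertices
`P_1, …, P_4` in the nonnegative quadrant with `P_1 ∈ 𝔓 ∩ τ_1`, `P_4 ∈ 𝔓 ∩ τ_2`,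
and `O, P_2, P_3` collinear. Then `𝔓` is Buchsbaum. -/
theorem stmt12 (P : Fin 4 → (Fin 2 → ℚ)) (hpos : ∀ j i, 0 ≤ P j i)
    (hvert : ∀ j, P j ∉ convexHull ℚ (P '' {k | k ≠ j}))
    (S : Set (Fin 2 → ℕ)) (hS : S = polySG (convexHull ℚ (Set.range P)))
    (G : Finset (Fin 2 → ℕ)) (hG : minimalGenSet S G)
    (p1 p4 : Fin 2 → ℕ) (h1 : toQ p1 = P 0) (h4 : toQ p4 = P 3)
    (hsimp : Simplicial S p1 p4)
    (hp1S : p1 ∈ S) (hp4S : p4 ∈ S)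
    (hcol : Collinear ℚ {0, P 1, P 2}) :
    IsBuchsbaumSG S G (coneN S) (rayN p1) (rayN p4) := by
  obtain ⟨hp1₀, hp4₀, hray, hcone⟩ := hsimp
  have hli := linearIndependent_of_rayN_ne hp1₀ hp4₀ hray
  have hSc : ∀ x ∈ S, toQ x ∈ coneQ {toQ p1, toQ p4} := fun x hx => by
    rw [← hcone]
    exact mem_coneQ_self ⟨x, hx, rfl⟩
  have hPc : ∀ j, P j ∈ coneQ {P 0, P 3} := fun j => h1 ▸ h4 ▸
    mem_coneQ_of_nonneg (hpos j) (subset_convexHull ℚ _ (Set.mem_range_self j)) (hS ▸ hSc)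
  have hT : RayCancellative S (rayN p1) (rayN p4) := by
    have := (rayCancellative_polyCone hpos (convexIndependent_of_forall_notMem hvert)
      (h1 ▸ h4 ▸ hli) hPc hcol).preimage toQAddHom
    rwa [← h1, ← h4, ← polySG_eq_preimage, ← hS] at this
  have hG₁ := exists_generator_mem_rayN hli hG.1 hSc hp1S hp1₀
  have hG₄ := exists_generator_mem_rayN (LinearIndependent.pair_symm_iff.1 hli) hG.1
    (Set.pair_comm (toQ p1) _ ▸ hSc) hp4S hp4₀
  rw [IsBuchsbaumSG, sbar_eq_self hG.1 hG₁ hG₄ hT]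
  exact isCMsg_of_rayCancellative hT ⟨hp1S, mem_rayN_self p1⟩ hp1₀ ⟨hp4S, mem_rayN_self p4⟩ hp4₀ _
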